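/- arXiv:2004.12976 — 6 statements merged into one kernel-verified Lean document; each statement's English description precedes it below -/
import Mathlib

section
/- For f(z) = exp(z) - 1, if the orbit of z ever enters the open left half-plane {w : Re(w) < 0}, then fⁿ(z) → 0 as n → ∞. -/
/-!
On the closed disc `D = {w : |w + 1| ≤ 1}` one has `re w ≤ -|w|²/2`, and writing
`exp u - 1 = u ∫₀¹ exp(tu) dt` and using convexity of `exp` gives
`|exp u - 1| ≤ |u| (1 + exp (re u))/2`. Hence `f(w) = exp w - 1` maps `D` into itself, does not
increase `|w|` there, and contracts by the factor `(1 + exp (-δ²/2))/2 < 1` where `|w| ≥ δ`.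
So along an orbit in `D` the moduli decrease and cannot stay above any `δ > 0`.
An orbit that enters the left half-plane lands in `D` one step later.
-/

open Filter Topology Metric Set

lemma Real.exp_mul_le_one_sub_add_mul_exp {t : ℝ} (ht₀ : 0 ≤ t) (ht₁ : t ≤ 1) (a : ℝ) :
    Real.exp (t * a) ≤ 1 - t + t * Real.exp a := by
  simpa [smul_eq_mul] using
    convexOn_exp.2 (mem_univ 0) (mem_univ a) (sub_nonneg.2 ht₁) ht₀ (by ring)

lemma Complex.norm_exp_sub_one_le_mul (u : ℂ) :
    ‖Complex.exp u - 1‖ ≤ ‖u‖ * ((1 + Real.exp u.re) / 2) := by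
  rcases eq_or_ne u 0 with rfl | hu
  · simp
  have hint : Complex.exp u - 1 = u * ∫ t in (0 : ℝ)..1, Complex.exp (u * t) := by
    rw [integral_exp_mul_complex hu, mul_div_cancel₀ _ hu]
    simp
  have hbound : ∫ t in (0 : ℝ)..1, ‖Complex.exp (u * t)‖
      ≤ ∫ t in (0 : ℝ)..1, (1 - t + t * Real.exp u.re) := by
    refine intervalIntegral.integral_mono_on zero_le_one
      (Continuous.intervalIntegrable (by fun_prop) _ _)
      (Continuous.intervalIntegrable (by fun_prop) _ _) fun t ht => ?_
    rw [Complex.norm_exp, Complex.re_mul_ofReal, mul_comm]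
    exact Real.exp_mul_le_one_sub_add_mul_exp ht.1 ht.2 _
  have hmean : ∫ t in (0 : ℝ)..1, (1 - t + t * Real.exp u.re) = (1 + Real.exp u.re) / 2 := by
    have hc (g : ℝ → ℝ) (hg : Continuous g) : IntervalIntegrable g MeasureTheory.volume 0 1 :=
      hg.intervalIntegrable 0 1
    rw [intervalIntegral.integral_add (hc _ (by fun_prop)) (hc _ (by fun_prop)),
      intervalIntegral.integral_sub (hc _ (by fun_prop)) (hc _ (by fun_prop))]
    simp only [intervalIntegral.integral_const, intervalIntegral.integral_mul_const, integral_id,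
      sub_zero, smul_eq_mul, mul_one, one_pow, zero_pow two_ne_zero]
    ring
  rw [hint, norm_mul]
  gcongr
  exact (intervalIntegral.norm_integral_le_integral_norm zero_le_one).trans (hbound.trans_eq hmean)

lemma re_le_neg_sq_norm_div_two_of_mem_closedBall {u : ℂ} (hu : u ∈ closedBall (-1 : ℂ) 1) :
    u.re ≤ -‖u‖ ^ 2 / 2 := by
  rw [mem_closedBall, dist_eq_norm, sub_neg_eq_add] at hu
  have hsq : ‖u + 1‖ ^ 2 ≤ 1 := pow_le_one₀ (norm_nonneg _) hu
  rw [Complex.sq_norm] at hsq ⊢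
  simp only [Complex.normSq_apply, Complex.add_re, Complex.add_im, Complex.one_re,
    Complex.one_im] at hsq ⊢
  nlinarith

lemma exp_sub_one_mem_closedBall {u : ℂ} (hu : u.re ≤ 0) :
    Complex.exp u - 1 ∈ closedBall (-1 : ℂ) 1 := by
  rw [mem_closedBall, dist_eq_norm, sub_neg_eq_add, sub_add_cancel, Complex.norm_exp]
  exact Real.exp_le_one_iff.2 hu

lemma mapsTo_exp_sub_one_closedBall :
    MapsTo (fun w => Complex.exp w - 1) (closedBall (-1 : ℂ) 1) (closedBall (-1 : ℂ) 1) :=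
  fun u hu => exp_sub_one_mem_closedBall <|
    (re_le_neg_sq_norm_div_two_of_mem_closedBall hu).trans (by nlinarith [sq_nonneg ‖u‖])

lemma norm_exp_sub_one_le_of_mem_closedBall {u : ℂ} (hu : u ∈ closedBall (-1 : ℂ) 1)
    {δ : ℝ} (hδ : 0 ≤ δ) (hδu : δ ≤ ‖u‖) :
    ‖Complex.exp u - 1‖ ≤ (1 + Real.exp (-δ ^ 2 / 2)) / 2 * ‖u‖ := by
  have hre : u.re ≤ -δ ^ 2 / 2 := by
    nlinarith [re_le_neg_sq_norm_div_two_of_mem_closedBall hu, mul_le_mul hδu hδu hδ (hδ.trans hδu)]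
  calc ‖Complex.exp u - 1‖ ≤ ‖u‖ * ((1 + Real.exp u.re) / 2) := Complex.norm_exp_sub_one_le_mul u
    _ ≤ (1 + Real.exp (-δ ^ 2 / 2)) / 2 * ‖u‖ := by
      rw [mul_comm]
      gcongr

lemma tendsto_iterate_zero_of_contracting {E : Type*} [SeminormedAddCommGroup E] {f : E → E}
    {s : Set E} (hs : MapsTo f s s) (hle : ∀ x ∈ s, ‖f x‖ ≤ ‖x‖)
    (hcontr : ∀ δ > 0, ∃ c ∈ Ico (0 : ℝ) 1, ∀ x ∈ s, δ ≤ ‖x‖ → ‖f x‖ ≤ c * ‖x‖)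
    {x : E} (hx : x ∈ s) : Tendsto (fun n => f^[n] x) atTop (𝓝 0) := by
  set r : ℕ → ℝ := fun n => ‖f^[n] x‖
  have hmem : ∀ n, f^[n] x ∈ s := fun n => hs.iterate n hx
  have hanti : Antitone r := antitone_nat_of_succ_le fun n => by
    simpa only [r, Function.iterate_succ_apply'] using hle _ (hmem n)
  suffices ∀ δ > 0, ∃ N, r N < δ by
    refine tendsto_zero_iff_norm_tendsto_zero.2 (tendsto_order.2 ⟨fun a ha => ?_, fun δ hδ => ?_⟩)
    · exact Eventually.of_forall fun n => ha.trans_le (norm_nonneg _)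
    · obtain ⟨N, hN⟩ := this δ hδ
      exact eventually_atTop.2 ⟨N, fun n hn => (hanti hn).trans_lt hN⟩
  intro δ hδ
  by_contra! hfar
  obtain ⟨c, ⟨hc₀, hc₁⟩, hc⟩ := hcontr δ hδ
  have hgeom : ∀ n, r n ≤ c ^ n * r 0 := by
    intro n
    induction n with
    | zero => simp
    | succ n ih =>
      calc r (n + 1) ≤ c * r n := by
            simpa only [r, Function.iterate_succ_apply'] using hc _ (hmem n) (hfar n)
        _ ≤ c * (c ^ n * r 0) := by gcongr
        _ = c ^ (n + 1) * r 0 := by ring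
  have hlim : Tendsto (fun n => c ^ n * r 0) atTop (𝓝 0) := by
    simpa using (tendsto_pow_atTop_nhds_zero_of_lt_one hc₀ hc₁).mul_const (r 0)
  exact hδ.not_ge (ge_of_tendsto hlim (Eventually.of_forall fun n => (hfar n).trans (hgeom n)))

/-- For `f(z) = exp z - 1`: if the orbit of `z` ever enters the open left half-plane,
then `fⁿ(z) → 0`. -/
theorem orbit_entering_left_halfplane_tendsto_zero (z : ℂ)
    (h : ∃ n : ℕ, ((fun w => Complex.exp w - 1)^[n] z).re < 0) :
    Tendsto (fun n : ℕ => (fun w => Complex.exp w - 1)^[n] z) atTop (𝓝 0) := by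
  obtain ⟨m, hm⟩ := h
  have hD : (fun w => Complex.exp w - 1)^[m + 1] z ∈ closedBall (-1 : ℂ) 1 := by
    rw [Function.iterate_succ_apply']
    exact exp_sub_one_mem_closedBall hm.le
  have hle : ∀ u ∈ closedBall (-1 : ℂ) 1, ‖Complex.exp u - 1‖ ≤ ‖u‖ := fun u hu => by
    simpa using norm_exp_sub_one_le_of_mem_closedBall hu le_rfl (norm_nonneg u)
  have hcontr : ∀ δ > 0, ∃ c ∈ Ico (0 : ℝ) 1, ∀ u ∈ closedBall (-1 : ℂ) 1, δ ≤ ‖u‖ →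
      ‖Complex.exp u - 1‖ ≤ c * ‖u‖ := fun δ hδ =>
    ⟨(1 + Real.exp (-δ ^ 2 / 2)) / 2,
      ⟨by positivity, by linarith [Real.exp_lt_one_iff.2 (by nlinarith : -δ ^ 2 / 2 < 0)]⟩,
      fun u hu hδu => norm_exp_sub_one_le_of_mem_closedBall hu hδ.le hδu⟩
  rw [← tendsto_add_atTop_iff_nat (m + 1)]
  simpa only [Function.iterate_add_apply] using
    tendsto_iterate_zero_of_contracting mapsTo_exp_sub_one_closedBall hle hcontr hD
end

section
/- Let λ = ⟨(N₀,t₀),(N₁,t₁),…⟩ be an infinite sequence in ℕ × ℤ such that X_{λ↾(k+1)} is nonempty for all k and N_i ≥ i for all i. Then the sequence t = (t₀, t₁, t₂, …) satisfies |tₙ| → ∞; in fact for every k and every n ≥ N_k, |tₙ| ≥ k+1. Moreover the sets X_{λ↾0} ⊇ X_{λ↾1} ⊇ ⋯ converge to the single point t. -/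
open Filter Topology

/-- `X = {s ∈ ℤ^ℕ : |sₙ| → ∞}`. -/
def Xset : Set (ℕ → ℤ) := {s | Tendsto (fun n => |s n|) atTop atTop}

/-- The stratum `X_α` for a finite sequence `α` of pairs `(N, t)`. -/
def strat (α : List (ℕ × ℤ)) : Set (ℕ → ℤ) :=
  {s | s ∈ Xset ∧ ∀ j : ℕ, ∀ h : j < α.length,
      s j = (α.get ⟨j, h⟩).2 ∧ ∀ k : ℕ, (α.get ⟨j, h⟩).1 ≤ k → ((j : ℤ) + 1) ≤ |s k|}

theorem exists_eq_on_lt_imp_mem_of_mem_nhds {α : Type*} [TopologicalSpace α]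
    {t : ℕ → α} {U : Set (ℕ → α)} (hU : U ∈ 𝓝 t) :
    ∃ M : ℕ, ∀ s : ℕ → α, (∀ i < M, s i = t i) → s ∈ U := by
  rw [nhds_pi, Filter.mem_pi] at hU
  obtain ⟨I, hI, V, hV, hVU⟩ := hU
  obtain ⟨M, hM⟩ := hI.bddAbove
  refine ⟨M + 1, fun s hs => hVU fun i hi => ?_⟩
  rw [hs i (Nat.lt_succ_of_le (hM hi))]
  exact mem_of_mem_nhds (hV i)

theorem tendsto_abs_atTop_of_forall_le {t : ℕ → ℤ} (N : ℕ → ℕ)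
    (h : ∀ k n : ℕ, N k ≤ n → ((k : ℤ) + 1) ≤ |t n|) :
    Tendsto (fun n => |t n|) atTop atTop := by
  refine tendsto_atTop_atTop.2 fun b => ⟨N b.toNat, fun n hn => ?_⟩
  linarith [h b.toNat n hn, Int.self_le_toNat b]

section Branch

variable {lam : ℕ → ℕ × ℤ} {m : ℕ} {s : ℕ → ℤ}

theorem apply_eq_of_mem_strat_ofFn (hs : s ∈ strat (List.ofFn fun i : Fin m => lam i))
    {j : ℕ} (hj : j < m) : s j = (lam j).2 := by
  simpa using (hs.2 j (by simpa using hj)).1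

theorem le_abs_of_mem_strat_ofFn (hs : s ∈ strat (List.ofFn fun i : Fin m => lam i))
    {j n : ℕ} (hj : j < m) (hn : (lam j).1 ≤ n) : ((j : ℤ) + 1) ≤ |s n| :=
  (hs.2 j (by simpa using hj)).2 n (by simpa using hn)

theorem le_abs_branch_of_nonempty
    (hne : ∀ k : ℕ, (strat (List.ofFn fun i : Fin (k + 1) => lam i)).Nonempty)
    {k n : ℕ} (hn : (lam k).1 ≤ n) : ((k : ℤ) + 1) ≤ |(lam n).2| := by
  obtain ⟨s, hs⟩ := hne (max k n)
  rw [← apply_eq_of_mem_strat_ofFn hs (by omega)]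
  exact le_abs_of_mem_strat_ofFn hs (by omega) hn

theorem branch_mem_strat_ofFn
    (hbound : ∀ k n : ℕ, (lam k).1 ≤ n → ((k : ℤ) + 1) ≤ |(lam n).2|) (m : ℕ) :
    (fun n => (lam n).2) ∈ strat (List.ofFn fun i : Fin m => lam i) :=
  ⟨tendsto_abs_atTop_of_forall_le _ hbound, fun j hj =>
    ⟨by simp, fun n hn => hbound j n (by simpa using hn)⟩⟩

end Branch

theorem strat_branch_converges_general (lam : ℕ → ℕ × ℤ)
    (hne : ∀ k : ℕ, (strat (List.ofFn fun i : Fin (k + 1) => lam i)).Nonempty) :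
    (∀ k n : ℕ, (lam k).1 ≤ n → ((k : ℤ) + 1) ≤ |(lam n).2|) ∧
    Tendsto (fun n => |(lam n).2|) atTop atTop ∧
    (∀ m : ℕ, (fun n => (lam n).2) ∈ strat (List.ofFn fun i : Fin m => lam i)) ∧
    (∀ U ∈ 𝓝 (fun n => (lam n).2), ∃ M : ℕ, ∀ m ≥ M,
      strat (List.ofFn fun i : Fin m => lam i) ⊆ U) := by
  have hbound : ∀ k n : ℕ, (lam k).1 ≤ n → ((k : ℤ) + 1) ≤ |(lam n).2| :=
    fun _ _ => le_abs_branch_of_nonempty hne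
  refine ⟨hbound, tendsto_abs_atTop_of_forall_le _ hbound, branch_mem_strat_ofFn hbound,
    fun U hU => ?_⟩
  obtain ⟨M, hM⟩ := exists_eq_on_lt_imp_mem_of_mem_nhds hU
  exact ⟨M, fun m hm s hs => hM s fun i hi => apply_eq_of_mem_strat_ofFn hs (by omega)⟩

/-- If `λ = ⟨(N₀,t₀),(N₁,t₁),…⟩` is an infinite branch (all strata along it nonempty,
`Nᵢ ≥ i`), then `t = (t₀,t₁,…)` satisfies `|tₙ| ≥ k+1` for `n ≥ N_k` (so `|tₙ| → ∞`),
`t` lies in every `X_{λ↾m}`, and the sets `X_{λ↾m}` converge to the point `t`. -/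
theorem strat_branch_converges (lam : ℕ → ℕ × ℤ)
    (hne : ∀ k : ℕ, (strat (List.ofFn fun i : Fin (k + 1) => lam i)).Nonempty)
    (hN : ∀ i : ℕ, i ≤ (lam i).1) :
    (∀ k n : ℕ, (lam k).1 ≤ n → ((k : ℤ) + 1) ≤ |(lam n).2|) ∧
    Tendsto (fun n => |(lam n).2|) atTop atTop ∧
    (∀ m : ℕ, (fun n => (lam n).2) ∈ strat (List.ofFn fun i : Fin m => lam i)) ∧
    (∀ U ∈ 𝓝 (fun n => (lam n).2), ∃ M : ℕ, ∀ m ≥ M,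
      strat (List.ofFn fun i : Fin m => lam i) ⊆ U) :=
  strat_branch_converges_general lam hne
end

section
/- Define F : [0,∞) → [0,∞) by F(t) = eᵗ - 1, with inverse F⁻¹(t) = ln(t+1). If s ∈ ℤ^ℕ satisfies s_k = k for all k ≥ n₀ (for some n₀), then sup_{k ≥ 1} F^{-k}(2π|s_k|) < ∞, where F^{-k} is the k-fold iterate of F⁻¹. -/
open Filter Topology

/-- One step of the model dynamics `𝓕(t,s) = (eᵗ - 1 - 2π|s₁|, σ s)`. -/
noncomputable def step (p : ℝ × (ℕ → ℤ)) : ℝ × (ℕ → ℤ) :=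
  (Real.exp p.1 - 1 - 2 * Real.pi * |((p.2 1 : ℤ) : ℝ)|, fun n => p.2 (n + 1))

/-- `(t,s) ∈ J(𝓕)`: every iterate has nonnegative first coordinate. -/
noncomputable def inJ (t : ℝ) (s : ℕ → ℤ) : Prop := ∀ n : ℕ, 0 ≤ (step^[n] (t, s)).1

/-- `t_s = inf {t ≥ 0 : (t,s) ∈ J(𝓕)}`, with value `∞` if the set is empty. -/
noncomputable def tmin (s : ℕ → ℤ) : ENNReal := sInf (ENNReal.ofReal '' {t : ℝ | inJ t s})

/-- `F⁻¹(t) = ln(t+1)`. -/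
noncomputable def Finv (t : ℝ) : ℝ := Real.log (t + 1)

/-!
`F^{-k}(x) ≤ c` as soon as `0 ≤ x ≤ Fᵏ(c)`. Since `F(c + y) ≥ F(c) + y` for `c, y ≥ 0` and
`F(c) - c ≥ c²/2`, the iterates `Fᵏ(c)` grow at least like `c + k c²/2`; taking `c = M + 2`
this beats `M k`, so `F^{-k}(x) ≤ M + 2` whenever `0 ≤ x ≤ M k`. For `s_k = k` this bounds all
but finitely many terms of the sequence by `2π + 2`.
-/

noncomputable def F (t : ℝ) : ℝ := Real.exp t - 1

lemma F_monotone : Monotone F := fun _ _ h => sub_le_sub_right (Real.exp_le_exp.2 h) 1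

lemma add_sq_div_two_le_F {c : ℝ} (hc : 0 ≤ c) : c + c ^ 2 / 2 ≤ F c := by
  have := Real.quadratic_le_exp_of_nonneg hc
  unfold F
  linarith

lemma F_add_le_F_add {c y : ℝ} (hc : 0 ≤ c) (hy : 0 ≤ y) : F c + y ≤ F (c + y) := by
  have hec : 1 ≤ Real.exp c := Real.one_le_exp hc
  have hey : 1 + y ≤ Real.exp y := by linarith [Real.add_one_le_exp y]
  calc F c + y ≤ Real.exp c * (1 + y) - 1 := by unfold F; nlinarith
    _ ≤ Real.exp c * Real.exp y - 1 := by gcongr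
    _ = F (c + y) := by rw [F, Real.exp_add]

lemma add_mul_sq_div_two_le_F_iterate {c : ℝ} (hc : 0 ≤ c) (k : ℕ) :
    c + k * (c ^ 2 / 2) ≤ F^[k] c := by
  induction k with
  | zero => simp
  | succ k ih =>
    have hy : 0 ≤ k * (c ^ 2 / 2) := by positivity
    calc c + ↑(k + 1) * (c ^ 2 / 2) ≤ F c + k * (c ^ 2 / 2) := by
          push_cast; linarith [add_sq_div_two_le_F hc]
      _ ≤ F (c + k * (c ^ 2 / 2)) := F_add_le_F_add hc hy
      _ ≤ F^[k + 1] c := by rw [Function.iterate_succ_apply']; exact F_monotone ih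

lemma Finv_le_iff_le_F {x y : ℝ} (hx : -1 < x) : Finv x ≤ y ↔ x ≤ F y := by
  rw [Finv, F, Real.log_le_iff_le_exp (by linarith), le_sub_iff_add_le]

lemma Finv_nonneg {x : ℝ} (hx : 0 ≤ x) : 0 ≤ Finv x :=
  Real.log_nonneg (by linarith)

lemma Finv_iterate_le_of_le_F_iterate {c : ℝ} :
    ∀ (k : ℕ) {x : ℝ}, 0 ≤ x → x ≤ F^[k] c → Finv^[k] x ≤ c
  | 0, _, _, hx => hx
  | k + 1, x, hx₀, hx => by
    rw [Function.iterate_succ_apply]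
    refine Finv_iterate_le_of_le_F_iterate k (Finv_nonneg hx₀) ?_
    rwa [Finv_le_iff_le_F (by linarith), ← Function.iterate_succ_apply' F]

lemma Finv_iterate_le_of_le_mul {M x : ℝ} {k : ℕ} (hM : 0 ≤ M) (hx₀ : 0 ≤ x) (hx : x ≤ M * k) :
    Finv^[k] x ≤ M + 2 := by
  refine Finv_iterate_le_of_le_F_iterate k hx₀ (hx.trans ?_)
  have hk : (0 : ℝ) ≤ k := k.cast_nonneg
  nlinarith [add_mul_sq_div_two_le_F_iterate (by linarith : 0 ≤ M + 2) k]

/-- If `s_k = k` eventually, then `sup_{k ≥ 1} F^{-k}(2π|s_k|)` is finite. -/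
theorem tstar_finite_of_eventually_linear (s : ℕ → ℤ) (n₀ : ℕ)
    (h : ∀ k : ℕ, n₀ ≤ k → s k = (k : ℤ)) :
    BddAbove {x : ℝ | ∃ k : ℕ, 1 ≤ k ∧ x = Finv^[k] (2 * Real.pi * |((s k : ℤ) : ℝ)|)} := by
  have hbound : ∀ᶠ k in atTop, Finv^[k] (2 * Real.pi * |((s k : ℤ) : ℝ)|) ≤ 2 * Real.pi + 2 := by
    filter_upwards [eventually_ge_atTop n₀] with k hk
    refine Finv_iterate_le_of_le_mul Real.two_pi_pos.le (by positivity) ?_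
    simp [h k hk]
  refine (isBoundedUnder_of_eventually_le hbound).bddAbove_range.mono ?_
  rintro x ⟨k, -, rfl⟩
  exact ⟨k, rfl⟩
end

section
/- The function ψ : ℤ^ℕ → [0,∞] defined by ψ(s) = t_s = inf{t ≥ 0 : (t,s) ∈ J(𝓕)} (∞ if empty) is lower semi-continuous, where ℤ^ℕ carries the product topology. -/
open Filter Topology

theorem lowerSemicontinuous_sInf_ofReal {X : Type*} [TopologicalSpace X] {S : X → Set ℝ}
    (hclosed : IsClosed {p : ℝ × X | p.1 ∈ S p.2}) (hupper : ∀ x, IsUpperSet (S x)) :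
    LowerSemicontinuous fun x => sInf (ENNReal.ofReal '' S x) := by
  intro x c hc
  have hc_top : c ≠ ⊤ := (hc.trans_le le_top).ne
  set r := c.toReal
  have hr : r ∉ S x := fun hr =>
    hc.not_ge (sInf_le_of_le ⟨r, hr, rfl⟩ (ENNReal.ofReal_toReal hc_top).le)
  have hnear : ∀ᶠ t in 𝓝 r, ∀ᶠ y in 𝓝 x, t ∉ S y := by
    have := hclosed.isOpen_compl.mem_nhds (show (r, x) ∈ _ from hr)
    rw [nhds_prod_eq] at this
    exact Eventually.curry this
  obtain ⟨r', hr'_near, hrr'⟩ := ((hnear.filter_mono nhdsWithin_le_nhds).and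
    (self_mem_nhdsWithin : Set.Ioi r ∈ 𝓝[>] r)).exists
  filter_upwards [hr'_near] with y hy
  calc c = ENNReal.ofReal r := (ENNReal.ofReal_toReal hc_top).symm
    _ < ENNReal.ofReal r' :=
      (ENNReal.ofReal_lt_ofReal_iff (ENNReal.toReal_nonneg.trans_lt hrr')).2 hrr'
    _ ≤ sInf (ENNReal.ofReal '' S y) := by
      refine le_sInf ?_
      rintro _ ⟨t, ht, rfl⟩
      exact ENNReal.ofReal_le_ofReal (le_of_not_ge fun htr' => hy (hupper y htr' ht))

theorem continuous_step : Continuous step := by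
  unfold step
  fun_prop

theorem isClosed_setOf_inJ : IsClosed {p : ℝ × (ℕ → ℤ) | inJ p.1 p.2} := by
  simp only [inJ, Set.ofPred_forall]
  exact isClosed_iInter fun n =>
    isClosed_le continuous_const (continuous_fst.comp (continuous_step.iterate n))

theorem step_iterate_fst_le_of_snd_eq (n : ℕ) {p q : ℝ × (ℕ → ℤ)} (h₁ : p.1 ≤ q.1)
    (h₂ : p.2 = q.2) : (step^[n] p).1 ≤ (step^[n] q).1 ∧ (step^[n] p).2 = (step^[n] q).2 := by
  induction n with
  | zero => exact ⟨h₁, h₂⟩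
  | succ n ih =>
    obtain ⟨ih₁, ih₂⟩ := ih
    rw [Function.iterate_succ_apply', Function.iterate_succ_apply']
    simp only [step, ih₂, and_true]
    gcongr

theorem isUpperSet_setOf_inJ (s : ℕ → ℤ) : IsUpperSet {t | inJ t s} :=
  fun t t' htt' ht n =>
  (ht n).trans (step_iterate_fst_le_of_snd_eq (p := (t, s)) (q := (t', s)) n htt' rfl).1

/-- `ψ(s) = t_s` is lower semi-continuous on `ℤ^ℕ` with the product topology. -/
theorem tmin_lowerSemicontinuous : LowerSemicontinuous tmin :=
  lowerSemicontinuous_sInf_ofReal isClosed_setOf_inJ isUpperSet_setOf_inJ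
end

section
/- With ψ(s) = t_s as above, ψ is monotone in the following sense: if s, s' ∈ ℤ^ℕ satisfy |s'ₙ| ≤ |sₙ| for all n, then t_{s'} ≤ t_s. -/
open Filter Topology

lemma step_fst_le {t t' : ℝ} {s s' : ℕ → ℤ} (ht : t ≤ t') (hs : |s' 1| ≤ |s 1|) :
    (step (t, s)).1 ≤ (step (t', s')).1 := by
  simp only [step, ← Int.cast_abs]
  gcongr

lemma step_iterate_fst_le {t t' : ℝ} {s s' : ℕ → ℤ} (ht : t ≤ t') (hs : ∀ n, |s' n| ≤ |s n|)
    (n : ℕ) : (step^[n] (t, s)).1 ≤ (step^[n] (t', s')).1 := by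
  induction n generalizing t t' s s' with
  | zero => exact ht
  | succ n ih =>
    simp only [Function.iterate_succ_apply]
    exact ih (step_fst_le ht (hs 1)) fun k => hs (k + 1)

lemma inJ.of_abs_le {t : ℝ} {s s' : ℕ → ℤ} (hJ : inJ t s) (hs : ∀ n, |s' n| ≤ |s n|) :
    inJ t s' :=
  fun n => (hJ n).trans (step_iterate_fst_le le_rfl hs n)

/-- Monotonicity: decreasing the absolute values of the entries of `s` can only
decrease `t_s`. -/
theorem tmin_monotone (s s' : ℕ → ℤ) (h : ∀ n, |s' n| ≤ |s n|) : tmin s' ≤ tmin s :=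
  sInf_le_sInf <| Set.image_mono fun _ hJ => hJ.of_abs_le h
end

section
/- With ψ(s) = t_s and t*_s := sup_{k ≥ 1} F^{-k}(2π|s_k|), one has t_s ≤ t*_s + 1 for every s ∈ ℤ^ℕ. In particular, if t*_s < ∞ then t_s < ∞. -/
open Filter Topology

/-- `t*_s = sup_{k ≥ 1} F^{-k}(2π|s_k|)`. -/
noncomputable def tstar (s : ℕ → ℤ) : ENNReal :=
  ⨆ k ∈ Set.Ici 1, ENNReal.ofReal (Finv^[k] (2 * Real.pi * |((s k : ℤ) : ℝ)|))

lemma Finv_iterate_nonneg (k : ℕ) {x : ℝ} (hx : 0 ≤ x) : 0 ≤ Finv^[k] x := by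
  induction k with
  | zero => exact hx
  | succ k ih => rw [Function.iterate_succ_apply']; exact Finv_nonneg ih

lemma two_mul_add_one_le_exp_sub_one {x t : ℝ} (hx : -1 < x) (ht : Finv x + 1 ≤ t) :
    2 * x + 1 ≤ Real.exp t - 1 := by
  have he : 2 ≤ Real.exp 1 := by linarith [Real.add_one_le_exp 1]
  calc 2 * x + 1 ≤ Real.exp 1 * (x + 1) - 1 := by nlinarith
    _ = Real.exp (Finv x + 1) - 1 := by
      rw [Finv, Real.exp_add, Real.exp_log (by linarith), mul_comm]
    _ ≤ Real.exp t - 1 := by gcongr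

lemma step_iterate_snd (p : ℝ × (ℕ → ℤ)) (n : ℕ) : (step^[n] p).2 = fun m => p.2 (m + n) := by
  induction n with
  | zero => rfl
  | succ n ih =>
    rw [Function.iterate_succ_apply', step, ih]
    funext m
    simp only [Nat.add_right_comm m 1 n, add_assoc]

lemma step_iterate_succ_fst (t : ℝ) (s : ℕ → ℤ) (n : ℕ) :
    (step^[n + 1] (t, s)).1 =
      Real.exp (step^[n] (t, s)).1 - 1 - 2 * Real.pi * |((s (n + 1) : ℤ) : ℝ)| := by
  rw [Function.iterate_succ_apply', step, step_iterate_snd]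
  simp only [Nat.add_comm 1 n]

lemma Finv_iterate_add_one_le_step_iterate {s : ℕ → ℤ} {t : ℝ}
    (ht : ∀ k, 1 ≤ k → Finv^[k] (2 * Real.pi * |((s k : ℤ) : ℝ)|) + 1 ≤ t) (n : ℕ) :
    ∀ k, 1 ≤ k → Finv^[k] (2 * Real.pi * |((s (n + k) : ℤ) : ℝ)|) + 1 ≤ (step^[n] (t, s)).1 := by
  induction n with
  | zero => simpa using ht
  | succ n ih =>
    intro k hk
    set a := 2 * Real.pi * |((s (n + 1) : ℤ) : ℝ)|
    set c := Finv^[k] (2 * Real.pi * |((s (n + 1 + k) : ℤ) : ℝ)|)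
    have ha : 2 * a + 1 ≤ Real.exp (step^[n] (t, s)).1 - 1 :=
      two_mul_add_one_le_exp_sub_one (by linarith [show 0 ≤ a by positivity])
        (by simpa using ih 1 le_rfl)
    have hc : 2 * c + 1 ≤ Real.exp (step^[n] (t, s)).1 - 1 := by
      have hc0 : 0 ≤ c := Finv_iterate_nonneg k (by positivity)
      refine two_mul_add_one_le_exp_sub_one (by linarith) ?_
      have h := ih (k + 1) (by omega)
      rwa [Function.iterate_succ_apply', ← add_assoc, add_right_comm] at h
    rw [step_iterate_succ_fst]
    linarith

lemma Finv_iterate_le_toReal_tstar {s : ℕ → ℤ} (htop : tstar s ≠ ⊤) {k : ℕ} (hk : 1 ≤ k) :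
    Finv^[k] (2 * Real.pi * |((s k : ℤ) : ℝ)|) ≤ (tstar s).toReal :=
  (ENNReal.ofReal_le_iff_le_toReal htop).mp <|
    le_iSup₂ (f := fun k (_ : k ∈ Set.Ici 1) =>
      ENNReal.ofReal (Finv^[k] (2 * Real.pi * |((s k : ℤ) : ℝ)|))) k hk

lemma inJ_of_tstar_add_one_le {s : ℕ → ℤ} (htop : tstar s ≠ ⊤) {t : ℝ}
    (ht : (tstar s).toReal + 1 ≤ t) : inJ t s := by
  intro n
  have h := Finv_iterate_add_one_le_step_iterate
    (fun k hk => by linarith [Finv_iterate_le_toReal_tstar htop hk]) n 1 le_rfl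
  linarith [Finv_iterate_nonneg 1 (x := 2 * Real.pi * |((s (n + 1) : ℤ) : ℝ)|) (by positivity)]

/-- `t_s ≤ t*_s + 1`; in particular `t*_s < ∞` implies `t_s < ∞`. -/
theorem tmin_le_tstar_add_one (s : ℕ → ℤ) :
    tmin s ≤ tstar s + 1 ∧ (tstar s < ⊤ → tmin s < ⊤) := by
  by_cases htop : tstar s = ⊤
  · simp [htop]
  have hle : tmin s ≤ tstar s + 1 :=
    calc tmin s ≤ ENNReal.ofReal ((tstar s).toReal + 1) :=
          sInf_le ⟨_, inJ_of_tstar_add_one_le htop le_rfl, rfl⟩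
      _ = tstar s + 1 := by
          rw [ENNReal.ofReal_add ENNReal.toReal_nonneg zero_le_one, ENNReal.ofReal_toReal htop,
            ENNReal.ofReal_one]
  exact ⟨hle, fun h => hle.trans_lt (ENNReal.add_lt_top.mpr ⟨h, ENNReal.one_lt_top⟩)⟩
end
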